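/- Let n ≥ 2, let k₀, k₁, …, kₙ ∈ ℤ satisfy k₁ + ⋯ + kₙ = 0, and let μ₀, μ₁, …, μₙ ∈ ℝ. Then the quantity μ₀k₀ + μ₁k₁ + ⋯ + μₙkₙ is invariant under the rotation map: with tildes denoting the rotated tuple, μ₀k̃₀ + μ̃₁k̃₁ + ⋯ + μ̃ₙk̃ₙ = μ₀k₀ + μ₁k₁ + ⋯ + μₙkₙ. -/

import Mathlib

open Finset

/-- The rotated charges: `k̃₀ = k₀ + k₁`, `k̃ⱼ = k_{j+1}` for `1 ≤ j ≤ n-1`, `k̃ₙ = k₁`. -/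
def rotK (n : ℕ) (k : ℕ → ℤ) : ℕ → ℤ :=
  fun j => if j = 0 then k 0 + k 1 else if j = n then k 1 else k (j + 1)

/-- The rotated masses: `μ̃ⱼ = μ₀/n + μ_{j+1}` for `1 ≤ j ≤ n-1`, `μ̃ₙ = μ₁ - (n-1)μ₀/n`;
`μ₀` is unchanged. -/
noncomputable def rotMu (n : ℕ) (μ₀ : ℝ) (μ : ℕ → ℝ) : ℕ → ℝ :=
  fun j => if j = n then μ 1 - ((n : ℝ) - 1) * μ₀ / n else μ₀ / n + μ (j + 1)

/-! The rotation moves the charges `k₂, …, kₙ` one slot down together with their masses, each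
mass picking up `μ₀/n`. Since these charges sum to `-k₁`, the extra terms contribute `-μ₀k₁/n`,
which cancels against the `μ₀k₁` gained by `k̃₀` and the `-(n-1)μ₀k₁/n` in `μ̃ₙk̃ₙ`. -/

theorem sum_Icc_succ_top' {M : Type*} [AddCommMonoid M] {a b : ℕ} (hab : a ≤ b + 1)
    (g : ℕ → M) : ∑ j ∈ Icc a (b + 1), g j = ∑ j ∈ Icc a b, g (j + 1) + g a := by
  rw [← insert_Icc_add_one_left_eq_Icc hab, sum_insert (by simp), ← map_add_right_Icc, sum_map,
    add_comm]
  rfl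

theorem rotK_zero (n : ℕ) (k : ℕ → ℤ) : rotK n k 0 = k 0 + k 1 := rfl

theorem rotK_self {n : ℕ} (hn : n ≠ 0) (k : ℕ → ℤ) : rotK n k n = k 1 := by
  simp [rotK, hn]

theorem rotK_of_mem_Ico {n j : ℕ} (hj : j ∈ Ico 1 n) (k : ℕ → ℤ) : rotK n k j = k (j + 1) := by
  grind [rotK]

theorem rotMu_self (n : ℕ) (μ₀ : ℝ) (μ : ℕ → ℝ) :
    rotMu n μ₀ μ n = μ 1 - ((n : ℝ) - 1) * μ₀ / n := if_pos rfl

theorem rotMu_of_ne {n j : ℕ} (hj : j ≠ n) (μ₀ : ℝ) (μ : ℕ → ℝ) :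
    rotMu n μ₀ μ j = μ₀ / n + μ (j + 1) := if_neg hj

theorem sum_rotMu_mul_rotK (m : ℕ) (k : ℕ → ℤ) (μ₀ : ℝ) (μ : ℕ → ℝ) :
    ∑ j ∈ Icc 1 (m + 1), rotMu (m + 1) μ₀ μ j * (rotK (m + 1) k j : ℝ) =
      μ₀ / (m + 1) * ∑ j ∈ Icc 1 m, (k (j + 1) : ℝ) + ∑ j ∈ Icc 1 m, μ (j + 1) * (k (j + 1) : ℝ)
        + (μ 1 - m * μ₀ / (m + 1)) * k 1 := by
  rw [sum_Icc_succ_top (by omega), rotMu_self, rotK_self m.succ_ne_zero, mul_sum,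
    ← sum_add_distrib]
  push_cast
  congr 1
  · refine sum_congr rfl fun j hj => ?_
    rw [mem_Icc] at hj
    rw [rotMu_of_ne (by omega), rotK_of_mem_Ico (by rw [mem_Ico]; omega)]
    push_cast
    ring
  · ring

/-- The quantity `μ₀k₀ + μ₁k₁ + ⋯ + μₙkₙ` is invariant under the rotation map. -/
theorem rotation_invariant_charge
    (n : ℕ) (hn : 2 ≤ n) (k : ℕ → ℤ) (μ₀ : ℝ) (μ : ℕ → ℝ)
    (h1 : ∑ j ∈ Icc 1 n, k j = 0) :
    μ₀ * (rotK n k 0 : ℝ) + ∑ j ∈ Icc 1 n, rotMu n μ₀ μ j * (rotK n k j : ℝ) =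
      μ₀ * (k 0 : ℝ) + ∑ j ∈ Icc 1 n, μ j * (k j : ℝ) := by
  obtain ⟨m, rfl⟩ : ∃ m, n = m + 1 := ⟨n - 1, by omega⟩
  have h_tail : ∑ j ∈ Icc 1 m, (k (j + 1) : ℝ) = -k 1 := by
    rw [sum_Icc_succ_top' (by omega)] at h1
    exact_mod_cast eq_neg_of_add_eq_zero_left h1
  rw [sum_rotMu_mul_rotK, sum_Icc_succ_top' (by omega), h_tail, rotK_zero]
  push_cast
  field_simp
  ring
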